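/- arXiv:2207.09417 — 2 statements merged into one kernel-verified Lean document; each statement's English description precedes it below -/
import Mathlib

section
/- With notation as above, there exists C > 0 such that for every u ∈ H¹(M), ‖φ_u‖_{H²} ≤ C|u|₂², where |u|₂ is the L²(M)-norm of u. -/
open MeasureTheory
open scoped RealInnerProductSpace

/-- There exists `C > 0` such that `‖φ_u‖_{H²} ≤ C |u|₂²` for every `u ∈ H¹(M)`.
Here `H2` models `H²(M)`, `T` realizes its elements as functions on `M`, the
embedding `H²(M) ↪ L^∞(M)` is encoded by `hemb`, and `phi u = φ_u` is the unique weak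
solution of `−Δφ + a²Δ²φ + φ = 4π u²`. -/
theorem stmt5 {M : Type*} [MeasurableSpace M] (μ : Measure M)
    {H2 : Type*} [NormedAddCommGroup H2] [InnerProductSpace ℝ H2]
    (T : H2 →ₗ[ℝ] (M → ℝ))
    (hemb : ∃ Ce : ℝ, 0 < Ce ∧ ∀ (ψ : H2) (x : M), |T ψ x| ≤ Ce * ‖ψ‖)
    (phi : (M → ℝ) → H2)
    (hweak : ∀ u : M → ℝ, ∀ ψ : H2,
      ⟪phi u, ψ⟫ = 4 * Real.pi * ∫ x, u x ^ 2 * T ψ x ∂μ) :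
    ∃ C : ℝ, 0 < C ∧ ∀ u : M → ℝ, Integrable (fun x => u x ^ 2) μ →
      ‖phi u‖ ≤ C * ∫ x, u x ^ 2 ∂μ := by
  obtain ⟨Ce, hCe, hb⟩ := hemb
  have hpi : (0:ℝ) < Real.pi := Real.pi_pos
  refine ⟨4 * Real.pi * Ce, by positivity, ?_⟩
  intro u hu
  set n := ‖phi u‖ with hn
  have hn0 : 0 ≤ n := norm_nonneg _
  have hint : 0 ≤ ∫ x, u x ^ 2 ∂μ := integral_nonneg fun x => sq_nonneg _
  have key : n ^ 2 ≤ 4 * Real.pi * Ce * n * ∫ x, u x ^ 2 ∂μ := by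
    have h1 := hweak u (phi u)
    rw [real_inner_self_eq_norm_sq] at h1
    rw [← hn] at h1
    by_cases hI : Integrable (fun x => u x ^ 2 * T (phi u) x) μ
    · have hmono : ∫ x, u x ^ 2 * T (phi u) x ∂μ ≤ ∫ x, u x ^ 2 * (Ce * n) ∂μ := by
        refine integral_mono hI (hu.mul_const _) fun x => ?_
        have hbx := abs_le.mp (hb (phi u) x)
        nlinarith [sq_nonneg (u x), hbx.2]
      rw [integral_mul_const] at hmono
      rw [h1]
      nlinarith [hmono]
    · rw [h1, integral_undef hI]
      have : (0:ℝ) ≤ 4 * Real.pi * Ce * n * ∫ x, u x ^ 2 ∂μ := by positivity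
      linarith
  have hK : (0:ℝ) ≤ 4 * Real.pi * Ce * ∫ x, u x ^ 2 ∂μ := by positivity
  nlinarith [key, hK, hn0]
end

section
/- Suppose c* > 0 satisfies c*^{p−2} − 4π q² c*² − ω = 0 with ω, q > 0 and p > 4. Then the constant function u ≡ c* lies on the Nehari manifold N_ε and its energy satisfies J_ε(c*) ≥ (μ_g(M)/ε³)[c*²/4 + (1/4 − 1/p)c*^p] → +∞ as ε → 0. In particular, for every fixed energy bound C > 0 there exists ε₀ > 0 such that for all ε < ε₀ no constant solution of the system has energy ≤ C. -/
/-!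
On a root `c`, the Nehari identity `c ^ p = ω c² + 4πq² c⁴` turns the energy into
`ω c² / 4 + (1/4 - 1/p) c ^ p ≥ ω c² / 4`. Every root satisfies `c ≥ ω ^ (1/(p-2))`, so the
energy of constant solutions is bounded below by a positive constant independent of the root,
and the prefactor `μ_g(M) / ε³` drives it to `+∞` uniformly.
-/

open Filter Topology Real

/-- Energy density `J_ε(c) · ε³ / μ_g(M)` of the constant function `u ≡ c`. -/
noncomputable def constEnergy (ω q p c : ℝ) : ℝ :=
  (ω / 2) * c ^ 2 + π * q ^ 2 * c ^ 4 - (1 / p) * c ^ p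

section ConstantSolution

variable {ω q p c : ℝ}

theorem rpow_eq_of_root (hc : 0 < c) (hroot : c ^ (p - 2) - 4 * π * q ^ 2 * c ^ 2 - ω = 0) :
    c ^ p = ω * c ^ 2 + 4 * π * q ^ 2 * c ^ 4 := by
  have hsplit : c ^ p = c ^ (p - 2) * c ^ 2 := by
    rw [← rpow_natCast c 2, ← rpow_add hc]
    norm_num
  linear_combination hsplit + c ^ 2 * hroot

theorem constEnergy_eq_of_root (hp : p ≠ 0) (hc : 0 < c)
    (hroot : c ^ (p - 2) - 4 * π * q ^ 2 * c ^ 2 - ω = 0) :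
    constEnergy ω q p c = ω * c ^ 2 / 4 + (1 / 4 - 1 / p) * c ^ p := by
  unfold constEnergy
  field_simp
  linear_combination (-2) * p * rpow_eq_of_root hc hroot

theorem mul_sq_div_four_le_constEnergy_of_root (hp : 4 ≤ p) (hc : 0 < c)
    (hroot : c ^ (p - 2) - 4 * π * q ^ 2 * c ^ 2 - ω = 0) :
    ω * c ^ 2 / 4 ≤ constEnergy ω q p c := by
  have hcoef : 0 ≤ 1 / 4 - 1 / p := by
    rw [sub_nonneg]; gcongr
  rw [constEnergy_eq_of_root (by positivity) hc hroot]
  have := rpow_pos_of_pos hc p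
  nlinarith

theorem rpow_inv_le_of_root (hω : 0 < ω) (hp : 2 < p) (hc : 0 < c)
    (hroot : c ^ (p - 2) - 4 * π * q ^ 2 * c ^ 2 - ω = 0) :
    ω ^ (p - 2)⁻¹ ≤ c := by
  rw [rpow_inv_le_iff_of_pos hω.le hc.le (by linarith)]
  have : 0 ≤ 4 * π * q ^ 2 * c ^ 2 := by positivity
  linarith

end ConstantSolution

theorem tendsto_div_pow_mul_nhdsGT_zero {μ K : ℝ} (hμ : 0 < μ) (hK : 0 < K) {n : ℕ}
    (hn : n ≠ 0) : Tendsto (fun ε : ℝ => μ / ε ^ n * K) (𝓝[>] 0) atTop := by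
  have hpow : Tendsto (fun ε : ℝ => ε ^ n) (𝓝[>] 0) (𝓝[>] 0) := by
    refine tendsto_nhdsWithin_of_tendsto_nhds_of_eventually_within _ ?_ ?_
    · simpa [zero_pow hn] using
        ((continuous_pow n).tendsto (0 : ℝ)).mono_left nhdsWithin_le_nhds
    · filter_upwards [self_mem_nhdsWithin] with ε (hε : 0 < ε) using pow_pos hε n
  refine (tendsto_inv_nhdsGT_zero.comp hpow).const_mul_atTop (mul_pos hμ hK) |>.congr ?_
  intro ε
  simp only [Function.comp_apply]
  ring

theorem exists_pos_forall_lt_div_pow_mul {μ K : ℝ} (hμ : 0 < μ) (hK : 0 < K) {n : ℕ}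
    (hn : n ≠ 0) (C : ℝ) : ∃ ε₀ : ℝ, 0 < ε₀ ∧ ∀ ε : ℝ, 0 < ε → ε < ε₀ → C < μ / ε ^ n * K := by
  obtain ⟨ε₀, hε₀, hsub⟩ := mem_nhdsGT_iff_exists_Ioo_subset.mp
    ((tendsto_div_pow_mul_nhdsGT_zero hμ hK hn).eventually_gt_atTop C)
  exact ⟨ε₀, hε₀, fun ε hε hεlt => hsub ⟨hε, hεlt⟩⟩

theorem stmt17_general (ω q p μM c₀ : ℝ) (hω : 0 < ω) (hp : 4 < p)
    (hμM : 0 < μM) (hc₀ : 0 < c₀)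
    (hroot : c₀ ^ (p - 2) - 4 * π * q ^ 2 * c₀ ^ 2 - ω = 0) :
    (∀ ε : ℝ, 0 < ε →
        (μM / ε ^ 3) * (ω * c₀ ^ 2 + 4 * π * q ^ 2 * c₀ ^ 4 - c₀ ^ p) = 0) ∧
      (∀ ε : ℝ, 0 < ε →
        (μM / ε ^ 3) * (ω * c₀ ^ 2 / 4 + (1 / 4 - 1 / p) * c₀ ^ p)
          ≤ (μM / ε ^ 3) *
              ((ω / 2) * c₀ ^ 2 + π * q ^ 2 * c₀ ^ 4 - (1 / p) * c₀ ^ p)) ∧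
      Tendsto
        (fun ε : ℝ => (μM / ε ^ 3) *
          ((ω / 2) * c₀ ^ 2 + π * q ^ 2 * c₀ ^ 4 - (1 / p) * c₀ ^ p))
        (nhdsWithin 0 (Set.Ioi 0)) atTop ∧
      ∀ C : ℝ, 0 < C → ∃ ε₀ : ℝ, 0 < ε₀ ∧ ∀ ε : ℝ, 0 < ε → ε < ε₀ →
        ∀ c : ℝ, 0 < c → c ^ (p - 2) - 4 * π * q ^ 2 * c ^ 2 - ω = 0 →
          C < (μM / ε ^ 3) *
              ((ω / 2) * c ^ 2 + π * q ^ 2 * c ^ 4 - (1 / p) * c ^ p) := by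
  have hE₀ := mul_sq_div_four_le_constEnergy_of_root hp.le hc₀ hroot
  refine ⟨fun ε _ => ?_, fun ε _ => ?_, ?_, fun C _ => ?_⟩
  · rw [rpow_eq_of_root hc₀ hroot, sub_self, mul_zero]
  · exact (congrArg _ (constEnergy_eq_of_root (by positivity) hc₀ hroot)).ge
  · exact tendsto_div_pow_mul_nhdsGT_zero hμM (lt_of_lt_of_le (by positivity) hE₀) three_ne_zero
  · set m := ω ^ (p - 2)⁻¹
    have hm : 0 < m := rpow_pos_of_pos hω _
    obtain ⟨ε₀, hε₀, hlt⟩ := exists_pos_forall_lt_div_pow_mul hμM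
      (show 0 < ω * m ^ 2 / 4 by positivity) three_ne_zero C
    refine ⟨ε₀, hε₀, fun ε hε hεlt c hc hcroot => (hlt ε hε hεlt).trans_le ?_⟩
    have hmc := rpow_inv_le_of_root hω (by linarith) hc hcroot
    have hEc := mul_sq_div_four_le_constEnergy_of_root hp.le hc hcroot
    gcongr
    exact le_trans (by gcongr) hEc

/-- Constant solutions have diverging energy: if `c* > 0` satisfies
`c*^{p−2} − 4πq²c*² − ω = 0` with `ω, q > 0` and `p > 4`, then the constant
function `u ≡ c*` lies on the Nehari manifold `N_ε` (its Nehari functional vanishes),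
its energy satisfies
`J_ε(c*) = (μ_g(M)/ε³)[(ω/2)c*² + πq²c*⁴ − c*^p/p] ≥ (μ_g(M)/ε³)[ωc*²/4 + (1/4 − 1/p)c*^p]`
and tends to `+∞` as `ε → 0⁺`; in particular, for every energy bound `C > 0` there is
`ε₀ > 0` such that for `ε < ε₀` no constant solution has energy `≤ C`. -/
theorem stmt17 (ω q p μM c₀ : ℝ) (hω : 0 < ω) (hq : 0 < q) (hp : 4 < p)
    (hμM : 0 < μM) (hc₀ : 0 < c₀)
    (hroot : c₀ ^ (p - 2) - 4 * π * q ^ 2 * c₀ ^ 2 - ω = 0) :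
    (∀ ε : ℝ, 0 < ε →
        (μM / ε ^ 3) * (ω * c₀ ^ 2 + 4 * π * q ^ 2 * c₀ ^ 4 - c₀ ^ p) = 0) ∧
      (∀ ε : ℝ, 0 < ε →
        (μM / ε ^ 3) * (ω * c₀ ^ 2 / 4 + (1 / 4 - 1 / p) * c₀ ^ p)
          ≤ (μM / ε ^ 3) *
              ((ω / 2) * c₀ ^ 2 + π * q ^ 2 * c₀ ^ 4 - (1 / p) * c₀ ^ p)) ∧
      Tendsto
        (fun ε : ℝ => (μM / ε ^ 3) *
          ((ω / 2) * c₀ ^ 2 + π * q ^ 2 * c₀ ^ 4 - (1 / p) * c₀ ^ p))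
        (nhdsWithin 0 (Set.Ioi 0)) atTop ∧
      ∀ C : ℝ, 0 < C → ∃ ε₀ : ℝ, 0 < ε₀ ∧ ∀ ε : ℝ, 0 < ε → ε < ε₀ →
        ∀ c : ℝ, 0 < c → c ^ (p - 2) - 4 * π * q ^ 2 * c ^ 2 - ω = 0 →
          C < (μM / ε ^ 3) *
              ((ω / 2) * c ^ 2 + π * q ^ 2 * c ^ 4 - (1 / p) * c ^ p) :=
  stmt17_general ω q p μM c₀ hω hp hμM hc₀ hroot
end
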